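/- Let J be a small cofiltered category, F : J ⥤ TopCat a diagram of finite discrete spaces, X the limit of F in TopCat with projection maps p_j : X → F(j), and let Y be a finite discrete space. Then the canonical map colim_{j ∈ J^op} Map(F(j), Y) → C(X, Y), sending (the class of) g : F(j) → Y to g ∘ p_j, is a bijection from the filtered colimit of the sets of maps F(j) → Y onto the set of continuous maps X → Y. Concretely: every continuous f : X → Y equals g ∘ p_j for some j and some g : F(j) → Y, and if g ∘ p_j = g' ∘ p_j for two maps g, g' : F(j) → Y then there is a morphism φ : j' → j in J with g ∘ F(φ) = g' ∘ F(φ). -/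

import Mathlib

open CategoryTheory

attribute [local instance] CategoryTheory.ConcreteCategory.instFunLike

/-- Full faithfulness of the Stone embedding: for a cofiltered diagram `F` of finite
discrete spaces with limit `X` (the subspace of compatible families in the product,
with projections `p j`) and a finite discrete space `Y`, the canonical map
`colim_{j ∈ J^op} Map(F j, Y) → C(X, Y)`, `g ↦ g ∘ p j`, is a bijection.
Concretely: every continuous `f : X → Y` equals `g ∘ p j` for some `j` and some
`g : F j → Y` (surjectivity), and if `g ∘ p j = g' ∘ p j` for `g, g' : F j → Y`
then there is a morphism `φ : j' ⟶ j` in `J` with `g ∘ F φ = g' ∘ F φ`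
(injectivity of the filtered colimit). -/
theorem stmt_5 {J : Type u} [SmallCategory J] [IsCofiltered J] (F : J ⥤ TopCat.{u})
    (hfin : ∀ j : J, Finite (F.obj j)) (hdisc : ∀ j : J, DiscreteTopology (F.obj j))
    {Y : Type v} [TopologicalSpace Y] [Finite Y] [DiscreteTopology Y] :
    (∀ f : {p : ∀ j : J, F.obj j // ∀ {j j' : J} (φ : j ⟶ j'), F.map φ (p j) = p j'} → Y,
      Continuous f →
        ∃ (j : J) (g : F.obj j → Y),
          ∀ p : {p : ∀ j : J, F.obj j // ∀ {j j' : J} (φ : j ⟶ j'), F.map φ (p j) = p j'},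
            f p = g (p.1 j)) ∧
    (∀ (j : J) (g g' : F.obj j → Y),
      (∀ p : {p : ∀ j : J, F.obj j // ∀ {j j' : J} (φ : j ⟶ j'), F.map φ (p j) = p j'},
          g (p.1 j) = g' (p.1 j)) →
        ∃ (j' : J) (φ : j' ⟶ j), ∀ a : F.obj j', g (F.map φ a) = g' (F.map φ a)) := by
  classical
  haveI : ∀ j : J, Finite (F.obj j) := hfin
  haveI : ∀ j : J, DiscreteTopology (F.obj j) := hdisc
  constructor
  · -- surjectivity
    intro f hf
    haveI : ∀ j : J, CompactSpace (F.obj j) := fun j => Finite.compactSpace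
    have hXc : IsClosed
        {p : ∀ j : J, F.obj j | ∀ (j j' : J) (φ : j ⟶ j'), F.map φ (p j) = p j'} := by
      have : {p : ∀ j : J, F.obj j | ∀ (j j' : J) (φ : j ⟶ j'), F.map φ (p j) = p j'} =
          ⋂ (j : J) (j' : J) (φ : j ⟶ j'), {p : ∀ j : J, F.obj j | F.map φ (p j) = p j'} := by
        ext p; simp [Set.mem_iInter]
      rw [this]
      refine isClosed_iInter fun j => isClosed_iInter fun j' => isClosed_iInter fun φ => ?_
      exact isClosed_eq ((F.map φ).hom.continuous.comp (continuous_apply j)) (continuous_apply j')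
    haveI hXcs : CompactSpace
        {p : ∀ j : J, F.obj j // ∀ {j j' : J} (φ : j ⟶ j'), F.map φ (p j) = p j'} :=
      isCompact_iff_compactSpace.mp hXc.isCompact
    let F' : J ⥤ Profinite.{u} :=
      { obj := fun j => Profinite.of (F.obj j)
        map := fun φ => CompHausLike.ofHom _ (F.map φ).hom
        map_id := fun j => by ext x; simp
        map_comp := fun φ ψ => by ext x; simp }
    let C : Limits.Cone F' :=
      { pt := Profinite.of
          {p : ∀ j : J, F.obj j // ∀ {j j' : J} (φ : j ⟶ j'), F.map φ (p j) = p j'}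
        π :=
          { app := fun j => CompHausLike.ofHom _ ⟨fun p => p.1 j, (continuous_apply j).comp continuous_subtype_val⟩
            naturality := fun j j' φ => by
              ext p
              exact (p.2 φ).symm } }
    have hC : Limits.IsLimit C :=
      { lift := fun s =>
          CompHausLike.ofHom _ ⟨fun x => ⟨fun j => s.π.app j x, fun {j j'} φ => by
              have h := s.w φ
              exact (ConcreteCategory.congr_hom h x)⟩,
            Continuous.subtype_mk (continuous_pi fun j => (ConcreteCategory.hom (s.π.app j)).continuous) _⟩
        fac := fun s j => rfl
        uniq := fun s m h => by
          ext x
          rename_i j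
          exact ConcreteCategory.congr_hom (h j) x }
    have hfLC : IsLocallyConstant f := (IsLocallyConstant.iff_continuous f).mpr hf
    obtain ⟨j, g, hg⟩ := Profinite.exists_locallyConstant C hC ⟨f, hfLC⟩
    refine ⟨j, g, fun p => ?_⟩
    have := congrFun (congrArg DFunLike.coe hg) p
    simp at this; exact this
  · -- injectivity
    intro j g g' hgg'
    by_cases hne : ∀ k : J, Nonempty (F.obj k)
    · haveI := hne
      set G := F ⋙ forget TopCat with hG
      haveI : ∀ k : J, Finite (G.obj k) := hfin
      haveI : ∀ k : J, Nonempty (G.obj k) := hne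
      have hml : G.IsMittagLeffler :=
        G.isMittagLeffler_of_exists_finite_range fun k => ⟨k, 𝟙 k, Set.toFinite _⟩
      obtain ⟨i, φ, hif⟩ := G.isMittagLeffler_iff_eventualRange.1 hml j
      refine ⟨i, φ, fun a => ?_⟩
      have hx : F.map φ a ∈ G.eventualRange j := hif ▸ ⟨a, rfl⟩
      haveI : ∀ k : J, Nonempty (G.toEventualRanges.obj k) :=
        fun k => G.toEventualRanges_nonempty hml k
      obtain ⟨s, hs⟩ :=
        G.toEventualRanges.eval_section_surjective_of_surjective
          (G.surjective_toEventualRanges hml) j ⟨F.map φ a, hx⟩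
      let t := G.toEventualRangesSectionsEquiv s
      have ht : t.1 j = F.map φ a := congrArg Subtype.val hs
      have := hgg' ⟨t.1, fun {k k'} ψ => t.2 ψ⟩
      rw [← ht]
      exact this
    · push_neg at hne
      obtain ⟨k, hk⟩ := hne
      obtain ⟨m, mk, mj, -⟩ := IsCofilteredOrEmpty.cone_objs k j
      exact ⟨m, mj, fun a => absurd ⟨F.map mk a⟩ (not_nonempty_iff.mpr hk)⟩
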